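/- Let ⟨T, Σ, C₁ ⊑ C₂⟩ with Σ = N_C be an EL TBox abduction problem with T in normal form and ⊤-free, Φ its first-order translation, and A = {A₁(t₁),…,A_n(t_n)} ⊆ PI^{g+}_{N_C}(Φ) a nonempty set of ground atoms over unary predicates (n > 0). Then there exist an EL description tree 𝔗 = (V,E,v₀,l) and a Skolem labeling sl of 𝔗 such that A = I^c_A(sl) and T ⊨ C₁ ⊑ C_𝔗. -/

import Mathlib

namespace ELAbd

/-! ### EL concepts, TBoxes, semantics -/

inductive ELConcept : Type where
  | top : ELConcept
  | atom : ℕ → ELConcept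
  | conj : ELConcept → ELConcept → ELConcept
  | ex : ℕ → ELConcept → ELConcept
deriving DecidableEq

abbrev CI := ELConcept × ELConcept
abbrev TBox := Finset CI

structure Interp (α : Type) where
  conc : ℕ → Set α
  role : ℕ → Set (α × α)

def ELConcept.sem {α : Type} (I : Interp α) : ELConcept → Set α
  | .top => Set.univ
  | .atom A => I.conc A
  | .conj C D => C.sem I ∩ D.sem I
  | .ex r C => {d | ∃ e, (d, e) ∈ I.role r ∧ e ∈ C.sem I}

def Models {α : Type} (I : Interp α) (T : TBox) : Prop :=
  ∀ ci ∈ T, ci.1.sem I ⊆ ci.2.sem I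

def Entails (T : TBox) (C D : ELConcept) : Prop :=
  ∀ (α : Type) (I : Interp α), Models I T → C.sem I ⊆ D.sem I

def EntailsCI (T : TBox) (ci : CI) : Prop := Entails T ci.1 ci.2

def TEntails (T T' : TBox) : Prop :=
  ∀ (α : Type) (I : Interp α), Models I T → Models I T'

def TEquiv (T T' : TBox) : Prop := TEntails T T' ∧ TEntails T' T

/-- Equality of concepts modulo the convention that conjunctions are read as
sets (associativity, commutativity, idempotence, `⊤` as empty conjunction). -/
inductive CEq : ELConcept → ELConcept → Prop
  | refl (C) : CEq C C
  | symm {C D} : CEq C D → CEq D C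
  | trans {C D E} : CEq C D → CEq D E → CEq C E
  | congr_conj {C C' D D'} : CEq C C' → CEq D D' → CEq (.conj C D) (.conj C' D')
  | congr_ex {r C C'} : CEq C C' → CEq (.ex r C) (.ex r C')
  | comm (C D) : CEq (.conj C D) (.conj D C)
  | assoc (C D E) : CEq (.conj (.conj C D) E) (.conj C (.conj D E))
  | idem (C) : CEq (.conj C C) C
  | top_unit (C) : CEq (.conj .top C) C

/-- The relation `≼⊓` on concepts. -/
inductive PrecSq : ELConcept → ELConcept → Prop
  | refl (C) : PrecSq C C
  | conjL {C D'} (D'') : PrecSq C D' → PrecSq C (.conj D' D'')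
  | ex (r) {C' D'} : PrecSq C' D' → PrecSq (.ex r C') (.ex r D')

def ELConcept.concNames : ELConcept → Set ℕ
  | .top => ∅
  | .atom A => {A}
  | .conj C D => C.concNames ∪ D.concNames
  | .ex _ C => C.concNames

def ELConcept.roleNames : ELConcept → Set ℕ
  | .top => ∅
  | .atom _ => ∅
  | .conj C D => C.roleNames ∪ D.roleNames
  | .ex r C => {r} ∪ C.roleNames

def ELConcept.size : ELConcept → ℕ
  | .top => 1
  | .atom _ => 1
  | .conj C D => C.size + D.size + 1
  | .ex _ C => C.size + 1

def ELConcept.exCount : ELConcept → ℕ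
  | .top => 0
  | .atom _ => 0
  | .conj C D => C.exCount + D.exCount
  | .ex _ C => C.exCount + 1

def tboxSize (T : TBox) : ℕ := T.sum (fun ci => ci.1.size + ci.2.size)

def tboxConcNames (T : TBox) : Set ℕ :=
  {A | ∃ ci ∈ T, A ∈ ci.1.concNames ∪ ci.2.concNames}

def tboxRoleNames (T : TBox) : Set ℕ :=
  {r | ∃ ci ∈ T, r ∈ ci.1.roleNames ∪ ci.2.roleNames}

/-- Normal form (simultaneously `⊤`-free): every CI has one of the four shapes
`A ⊑ B`, `A₁ ⊓ A₂ ⊑ B`, `∃r.A ⊑ B`, `A ⊑ ∃r.B` with atomic concepts. -/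
def NFci (ci : CI) : Prop :=
  (∃ A B, ci = (ELConcept.atom A, ELConcept.atom B)) ∨
  (∃ A₁ A₂ B, ci = (ELConcept.conj (.atom A₁) (.atom A₂), ELConcept.atom B)) ∨
  (∃ r A B, ci = (ELConcept.ex r (.atom A), ELConcept.atom B)) ∨
  (∃ A r B, ci = (ELConcept.atom A, ELConcept.ex r (.atom B)))

def NormalForm (T : TBox) : Prop := ∀ ci ∈ T, NFci ci

/-- Normal form where the components may also be `⊤`. -/
def AtomTop (C : ELConcept) : Prop := C = .top ∨ ∃ A, C = ELConcept.atom A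

def NFciTop (ci : CI) : Prop :=
  (AtomTop ci.1 ∧ AtomTop ci.2) ∨
  (∃ A₁ A₂, ci.1 = ELConcept.conj A₁ A₂ ∧ AtomTop A₁ ∧ AtomTop A₂ ∧ AtomTop ci.2) ∨
  (∃ r A, ci.1 = ELConcept.ex r A ∧ AtomTop A ∧ AtomTop ci.2) ∨
  (∃ r B, ci.2 = ELConcept.ex r B ∧ AtomTop B ∧ AtomTop ci.1)

def NormalFormTop (T : TBox) : Prop := ∀ ci ∈ T, NFciTop ci

/-! ### EL description trees -/

noncomputable def conjOf (s : Finset ℕ) : ELConcept :=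
  (s.toList.map ELConcept.atom).foldr ELConcept.conj ELConcept.top

structure DescTree where
  V : Finset ℕ
  root : ℕ
  E : Finset (ℕ × ℕ × ℕ)      -- (v, r, w) : edge from v to w labeled r
  label : ℕ → Finset ℕ
  dep : ℕ → ℕ
  root_mem : root ∈ V
  edge_mem : ∀ e ∈ E, e.1 ∈ V ∧ e.2.2 ∈ V
  parent_unique : ∀ e ∈ E, ∀ e' ∈ E, e.2.2 = e'.2.2 → e = e'
  parent_exists : ∀ v ∈ V, v ≠ root → ∃ e ∈ E, e.2.2 = v
  dep_root : dep root = 0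
  dep_edge : ∀ e ∈ E, dep e.2.2 = dep e.1 + 1

noncomputable def DescTree.conceptAt (t : DescTree) : ℕ → ℕ → ELConcept
  | 0, v => conjOf (t.label v)
  | n + 1, v =>
      ((t.label v).toList.map ELConcept.atom ++
        (t.E.filter (fun e => e.1 = v)).toList.map
          (fun e => ELConcept.ex e.2.1 (t.conceptAt n e.2.2))).foldr ELConcept.conj ELConcept.top

/-- The concept `C_𝔗` represented by a description tree. -/
noncomputable def DescTree.concept (t : DescTree) : ELConcept := t.conceptAt t.V.card t.root

/-- `t` is a description tree for the concept `D` (concept equality is taken modulo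
the conjunctions-as-sets convention). -/
def Represents (t : DescTree) (D : ELConcept) : Prop := CEq t.concept D

/-- Weak homomorphism from `src` to `tgt`. -/
def WeakHom (src tgt : DescTree) (φ : ℕ → ℕ) : Prop :=
  φ src.root = tgt.root ∧ ∀ e ∈ src.E, (φ e.1, e.2.1, φ e.2.2) ∈ tgt.E

/-- `T`-homomorphism from `src` to `tgt`. -/
def THom (T : TBox) (src tgt : DescTree) (φ : ℕ → ℕ) : Prop :=
  WeakHom src tgt φ ∧
  ∀ w ∈ src.V, Entails T (conjOf (tgt.label (φ w))) (conjOf (src.label w))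

/-! ### Abduction problems, hypotheses, connection minimality -/

inductive AtomConj (S : Set ℕ) : ELConcept → Prop
  | atom {A} : A ∈ S → AtomConj S (.atom A)
  | conj {C D} : AtomConj S C → AtomConj S D → AtomConj S (.conj C D)

def IsHypothesis (T : TBox) (S : Set ℕ) (C1 C2 : ℕ) (H : TBox) : Prop :=
  (∀ ci ∈ H, (AtomConj S ci.1 ∨ ci.1 = ELConcept.top) ∧ AtomConj S ci.2) ∧
  Entails (T ∪ H) (.atom C1) (.atom C2) ∧
  ∀ ci ∈ H, ¬ EntailsCI T ci

def BuiltOver (S : Set ℕ) (C : ELConcept) : Prop := C.concNames ⊆ S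

/-- The TBox determined by condition (4) of the definition of connection minimality. -/
def hypSetOf (T : TBox) (t1 t2 : DescTree) (φ : ℕ → ℕ) : Set CI :=
  {ci | ∃ w ∈ t2.V, ci = (conjOf (t1.label (φ w)), conjOf (t2.label w)) ∧
        ¬ EntailsCI T ci}

/-- Conditions (1)–(4) of connection minimality, with explicit witnessing
description trees `t1`, `t2` for `D1`, `D2` and the weak homomorphism `φ`
from `𝔗_{D₂}` to `𝔗_{D₁}`. -/
def ConnMinimalWit (T : TBox) (S : Set ℕ) (C1 C2 : ℕ) (H : TBox)
    (D1 D2 : ELConcept) (t1 t2 : DescTree) (φ : ℕ → ℕ) : Prop :=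
  BuiltOver S D1 ∧ BuiltOver S D2 ∧
  Represents t1 D1 ∧ Represents t2 D2 ∧
  Entails T (.atom C1) D1 ∧
  Entails T D2 (.atom C2) ∧
  (∀ D2', Entails T D2' (.atom C2) → PrecSq D2' D2 → PrecSq D2 D2') ∧
  WeakHom t2 t1 φ ∧
  (↑H : Set CI) = hypSetOf T t1 t2 φ

def ConnMinimal (T : TBox) (S : Set ℕ) (C1 C2 : ℕ) (H : TBox) : Prop :=
  IsHypothesis T S C1 C2 H ∧
  ∃ D1 D2 t1 t2 φ, ConnMinimalWit T S C1 C2 H D1 D2 t1 t2 φ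

/-- Packedness of a witness: no alternative `D₁'`, `φ'` (for the same `D₂`, `t₂`)
strictly enlarges one of the left-hand side labels while keeping all others. -/
def PackedWit (T : TBox) (S : Set ℕ) (C1 : ℕ) (t1 t2 : DescTree) (φ : ℕ → ℕ) : Prop :=
  ¬ ∃ (D1' : ELConcept) (t1' : DescTree) (φ' : ℕ → ℕ) (w : ℕ),
      BuiltOver S D1' ∧ Represents t1' D1' ∧ Entails T (.atom C1) D1' ∧
      WeakHom t2 t1' φ' ∧ w ∈ t2.V ∧
      t1.label (φ w) ⊂ t1'.label (φ' w) ∧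
      ∀ w' ∈ t2.V, w' ≠ w → t1.label (φ w') = t1'.label (φ' w')

def PackedConnMinimal (T : TBox) (S : Set ℕ) (C1 C2 : ℕ) (H : TBox) : Prop :=
  IsHypothesis T S C1 C2 H ∧
  ∃ D1 D2 t1 t2 φ, ConnMinimalWit T S C1 C2 H D1 D2 t1 t2 φ ∧
    PackedWit T S C1 t1 t2 φ

/-! ### First-order logic: terms, clauses, semantics -/

/-- Skolem functions: one for each (copy, axiom) pair. -/
abbrev SkFun := Bool × CI

inductive Term : Type where
  | var : ℕ → Term
  | sk0 : Term
  | app : SkFun → Term → Term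
deriving DecidableEq

/-- Ground Skolem terms. -/
inductive GTerm : Type where
  | sk0 : GTerm
  | app : SkFun → GTerm → GTerm
deriving DecidableEq

def GTerm.toTerm : GTerm → Term
  | .sk0 => .sk0
  | .app f t => .app f t.toTerm

def GTerm.depth : GTerm → ℕ
  | .sk0 => 0
  | .app _ t => t.depth + 1

inductive GTerm.Subterm : GTerm → GTerm → Prop
  | refl (t) : GTerm.Subterm t t
  | app {s t} (f) : GTerm.Subterm s t → GTerm.Subterm s (.app f t)

/-- Atoms; unary predicates `(b, A)` where `b = false` marks the original copy of the
atomic concept `A` and `b = true` its duplicate `Ā`. -/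
inductive Atm : Type where
  | conc : (Bool × ℕ) → Term → Atm
  | role : ℕ → Term → Term → Atm
deriving DecidableEq

structure Lit : Type where
  pos : Bool
  atm : Atm
deriving DecidableEq

abbrev Clause := Finset Lit

inductive GAtm : Type where
  | conc : (Bool × ℕ) → GTerm → GAtm
  | role : ℕ → GTerm → GTerm → GAtm
deriving DecidableEq

def GAtm.toAtm : GAtm → Atm
  | .conc P t => .conc P t.toTerm
  | .role r t u => .role r t.toTerm u.toTerm

structure FOInterp (α : Type) where
  c0 : α
  app : SkFun → α → α
  conc : Bool × ℕ → Set α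
  role : ℕ → Set (α × α)

def Term.eval {α : Type} (I : FOInterp α) (ρ : ℕ → α) : Term → α
  | .var x => ρ x
  | .sk0 => I.c0
  | .app f t => I.app f (t.eval I ρ)

def Atm.sat {α : Type} (I : FOInterp α) (ρ : ℕ → α) : Atm → Prop
  | .conc P t => t.eval I ρ ∈ I.conc P
  | .role r t u => (t.eval I ρ, u.eval I ρ) ∈ I.role r

def Lit.sat {α : Type} (I : FOInterp α) (ρ : ℕ → α) (l : Lit) : Prop :=
  if l.pos then l.atm.sat I ρ else ¬ l.atm.sat I ρ

/-- Satisfaction of a clause: the universal closure of the disjunction holds. -/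
def ClauseSat {α : Type} (I : FOInterp α) (c : Clause) : Prop :=
  ∀ ρ : ℕ → α, ∃ l ∈ c, l.sat I ρ

def CModels {α : Type} (I : FOInterp α) (Ψ : Set Clause) : Prop :=
  ∀ c ∈ Ψ, ClauseSat I c

def CEntails (Ψ : Set Clause) (c : Clause) : Prop :=
  ∀ (α : Type) (I : FOInterp α), CModels I Ψ → ClauseSat I c

def ClEntails (c d : Clause) : Prop := CEntails {c} d

def IsPrimeImplicate (Ψ : Set Clause) (c : Clause) : Prop :=
  CEntails Ψ c ∧ ∀ c' : Clause, CEntails Ψ c' → ClEntails c' c → ClEntails c c'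

def Term.vars : Term → Set ℕ
  | .var x => {x}
  | .sk0 => ∅
  | .app _ t => t.vars

def Atm.vars : Atm → Set ℕ
  | .conc _ t => t.vars
  | .role _ t u => t.vars ∪ u.vars

def ClauseVars (c : Clause) : Set ℕ := {x | ∃ l ∈ c, x ∈ l.atm.vars}

def ClauseGround (c : Clause) : Prop := ClauseVars c = ∅
def ClausePositive (c : Clause) : Prop := ∀ l ∈ c, l.pos = true
def ClauseNegative (c : Clause) : Prop := ∀ l ∈ c, l.pos = false

def Atm.inSig (S : Set ℕ) : Atm → Prop
  | .conc P _ => P.2 ∈ S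
  | .role _ _ _ => True

def ClauseInSig (S : Set ℕ) (c : Clause) : Prop := ∀ l ∈ c, l.atm.inSig S

/-- Positive ground prime implicates over `Σ ∪ N_R`. -/
def PIpos (S : Set ℕ) (Ψ : Set Clause) : Set Clause :=
  {c | IsPrimeImplicate Ψ c ∧ ClauseGround c ∧ ClausePositive c ∧ ClauseInSig S c}

/-- Negative ground prime implicates over `Σ ∪ N_R`. -/
def PIneg (S : Set ℕ) (Ψ : Set Clause) : Set Clause :=
  {c | IsPrimeImplicate Ψ c ∧ ClauseGround c ∧ ClauseNegative c ∧ ClauseInSig S c}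

/-- The ground atom `a` belongs (as a unit clause) to `PI^{g+}_Σ(Ψ)`. -/
def InPIpos (S : Set ℕ) (Ψ : Set Clause) (a : GAtm) : Prop :=
  ({⟨true, a.toAtm⟩} : Clause) ∈ PIpos S Ψ

/-! ### Substitutions and resolution -/

def Term.subst (σ : ℕ → Term) : Term → Term
  | .var x => σ x
  | .sk0 => .sk0
  | .app f t => .app f (t.subst σ)

def Atm.subst (σ : ℕ → Term) : Atm → Atm
  | .conc P t => .conc P (t.subst σ)
  | .role r t u => .role r (t.subst σ) (u.subst σ)

def Lit.subst (σ : ℕ → Term) (l : Lit) : Lit := ⟨l.pos, l.atm.subst σ⟩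

def ClauseSubst (σ : ℕ → Term) (c : Clause) : Clause := c.image (Lit.subst σ)

def IsUnifier (σ : ℕ → Term) (a b : Atm) : Prop := a.subst σ = b.subst σ

def IsMGU (σ : ℕ → Term) (a b : Atm) : Prop :=
  IsUnifier σ a b ∧ ∀ τ, IsUnifier τ a b → ∃ δ, ∀ x, (σ x).subst δ = τ x

/-- Resolution derivations from `Ψ`, where every resolvent must satisfy `ok`. -/
inductive Deriv (Ψ : Set Clause) (ok : Clause → Prop) : Clause → Prop
  | hyp {c : Clause} : c ∈ Ψ → Deriv Ψ ok c
  | res {c₁ c₂ : Clause} {a b : Atm} {σ : ℕ → Term} :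
      Deriv Ψ ok c₁ → Deriv Ψ ok c₂ →
      (⟨true, a⟩ : Lit) ∈ c₁ → (⟨false, b⟩ : Lit) ∈ c₂ → IsMGU σ a b →
      ok (ClauseSubst σ (c₁.erase ⟨true, a⟩ ∪ c₂.erase ⟨false, b⟩)) →
      Deriv Ψ ok (ClauseSubst σ (c₁.erase ⟨true, a⟩ ∪ c₂.erase ⟨false, b⟩))
  | factor {c : Clause} {l₁ l₂ : Lit} {σ : ℕ → Term} :
      Deriv Ψ ok c → l₁ ∈ c → l₂ ∈ c → l₁ ≠ l₂ → l₁.pos = l₂.pos →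
      IsMGU σ l₁.atm l₂.atm →
      ok (ClauseSubst σ (c.erase l₂)) →
      Deriv Ψ ok (ClauseSubst σ (c.erase l₂))

/-! ### The translation Φ of an abduction problem -/

def vx : Term := .var 0
def vy : Term := .var 1
def pcl (b : Bool) (A : ℕ) (t : Term) : Lit := ⟨true, .conc (b, A) t⟩
def ncl (b : Bool) (A : ℕ) (t : Term) : Lit := ⟨false, .conc (b, A) t⟩
def prl (r : ℕ) (t u : Term) : Lit := ⟨true, .role r t u⟩
def nrl (r : ℕ) (t u : Term) : Lit := ⟨false, .role r t u⟩

def clausesOf (b : Bool) (ci : CI) : Set Clause :=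
  match ci with
  | (.atom A, .atom B) => {({ncl b A vx, pcl b B vx} : Clause)}
  | (.conj (.atom A₁) (.atom A₂), .atom B) =>
      {({ncl b A₁ vx, ncl b A₂ vx, pcl b B vx} : Clause)}
  | (.ex r (.atom A), .atom B) =>
      {({nrl r vx vy, ncl b A vy, pcl b B vx} : Clause)}
  | (.atom A, .ex r (.atom B)) =>
      {({ncl b A vx, prl r vx (.app (b, (.atom A, .ex r (.atom B))) vx)} : Clause),
       ({ncl b A vx, pcl b B (.app (b, (.atom A, .ex r (.atom B))) vx)} : Clause)}
  | _ => ∅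

/-- The clausal translation `Φ` of the abduction problem `⟨T, Σ, C₁ ⊑ C₂⟩`. -/
def Translation (T : TBox) (C1 C2 : ℕ) : Set Clause :=
  (⋃ ci ∈ T, clausesOf false ci ∪ clausesOf true ci) ∪
  {({pcl false C1 .sk0} : Clause), ({ncl true C2 .sk0} : Clause)}

/-- The presaturation `Φ_p` of a clause set. -/
def presat (Ψ : Set Clause) : Set Clause :=
  Ψ ∪ {c | ∃ (b : Bool) (A B : ℕ),
        c = ({ncl b A vx, pcl b B vx} : Clause) ∧ CEntails Ψ c}

/-! ### Herbrand interpretations -/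

def herb (S : Set GAtm) : FOInterp GTerm where
  c0 := .sk0
  app := .app
  conc := fun P => {t | GAtm.conc P t ∈ S}
  role := fun r => {p | GAtm.role r p.1 p.2 ∈ S}

def HModels (S : Set GAtm) (Ψ : Set Clause) : Prop := CModels (herb S) Ψ

def piPosAtoms (S : Set ℕ) (Ψ : Set Clause) : Set GAtm := {a | InPIpos S Ψ a}

/-- EL semantics of a concept in a Herbrand interpretation (original predicates). -/
def gsem (I : Set GAtm) : ELConcept → Set GTerm
  | .top => Set.univ
  | .atom A => {t | GAtm.conc (false, A) t ∈ I}
  | .conj C D => gsem I C ∩ gsem I D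
  | .ex r C => {t | ∃ u, GAtm.role r t u ∈ I ∧ u ∈ gsem I C}

/-! ### Canonical models of description trees -/

/-- The canonical model `I^c(sl)` of a description tree with Skolem labeling `sl`. -/
def canonModel (t : DescTree) (sl : ℕ → GTerm) : Set GAtm :=
  {a | ∃ e ∈ t.E, a = GAtm.role e.2.1 (sl e.1) (sl e.2.2)} ∪
  {a | ∃ v ∈ t.V, ∃ A ∈ t.label v, a = GAtm.conc (false, A) (sl v)}

/-- The unary-predicate part `I^c_A(sl)` of the canonical model, as labelled pairs. -/
def canonA (t : DescTree) (sl : ℕ → GTerm) : Set (ℕ × GTerm) :=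
  {p | ∃ v ∈ t.V, p.1 ∈ t.label v ∧ p.2 = sl v}

/-- The clause `⋁_{v ∈ V₂, B ∈ l₂(v)} ¬B̄(sl v)`. -/
def negTreeClause (t : DescTree) (sl : ℕ → GTerm) : Clause :=
  t.V.biUnion (fun v =>
    (t.label v).image (fun B => (⟨false, Atm.conc (true, B) (sl v).toTerm⟩ : Lit)))

/-! ### Constructible hypotheses -/

def negClauseOf (B : Finset (ℕ × GTerm)) : Clause :=
  B.image (fun p => (⟨false, Atm.conc (true, p.1) p.2.toTerm⟩ : Lit))

def posUnit (p : ℕ × GTerm) : Clause := {⟨true, Atm.conc (false, p.1) p.2.toTerm⟩}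

/-- `C_{X,t} = ⊓{A | A(t) ∈ X}`. -/
noncomputable def CAt (X : Finset (ℕ × GTerm)) (t : GTerm) : ELConcept :=
  conjOf ((X.filter (fun p => p.2 = t)).image Prod.fst)

/-- `H` is the hypothesis constructed from the sets `A` and `B` of ground atoms. -/
def ConstructibleVia (S : Set ℕ) (Ψ : Set Clause)
    (A B : Finset (ℕ × GTerm)) (H : TBox) : Prop :=
  A.Nonempty ∧ B.Nonempty ∧
  negClauseOf B ∈ PIneg S Ψ ∧
  (∀ p ∈ B, ∃ a, InPIpos S Ψ (GAtm.conc (false, a) p.2)) ∧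
  ((↑A : Set (ℕ × GTerm)) =
    {q | InPIpos S Ψ (GAtm.conc (false, q.1) q.2) ∧ ∃ p ∈ B, p.2 = q.2}) ∧
  ((↑H : Set CI) =
    {ci | ∃ p ∈ B, ci = (CAt A p.2, CAt B p.2) ∧ ¬ PrecSq (CAt B p.2) (CAt A p.2)})

def Constructible (S : Set ℕ) (Ψ : Set Clause) (H : TBox) : Prop :=
  ∃ A B, ConstructibleVia S Ψ A B H

/-! ### Clause shapes I3–I7, signature counts -/

def isI3 (c : Clause) : Prop :=
  ∃ P Q : Bool × ℕ, c = ({⟨false, .conc P vx⟩, ⟨true, .conc Q vx⟩} : Clause)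

def isI4 (c : Clause) : Prop :=
  ∃ P₁ P₂ Q : Bool × ℕ,
    c = ({⟨false, .conc P₁ vx⟩, ⟨false, .conc P₂ vx⟩, ⟨true, .conc Q vx⟩} : Clause)

def isI5 (c : Clause) : Prop :=
  ∃ (r : ℕ) (P Q : Bool × ℕ),
    c = ({⟨false, .role r vx vy⟩, ⟨false, .conc P vy⟩, ⟨true, .conc Q vx⟩} : Clause)

def isI7 (c : Clause) : Prop :=
  ∃ (P Q : Bool × ℕ) (f : SkFun),
    c = ({⟨false, .conc P vx⟩, ⟨true, .conc Q (.app f vx)⟩} : Clause)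

/-- The atomic concept `A_sk` occurring positively in the I7-clause introducing `sk`
(as a predicate, with the copy flag of `sk`). -/
def skHeadPred (f : SkFun) : Bool × ℕ :=
  (f.1, match f.2.2 with
        | .ex _ (.atom B) => B
        | _ => 0)

def Term.funs : Term → Set SkFun
  | .var _ => ∅
  | .sk0 => ∅
  | .app f t => insert f t.funs

def Atm.funs : Atm → Set SkFun
  | .conc _ t => t.funs
  | .role _ t u => t.funs ∪ u.funs

def clauseFuns (c : Clause) : Set SkFun := {f | ∃ l ∈ c, f ∈ l.atm.funs}

def clauseConcs (c : Clause) : Set (Bool × ℕ) := {P | ∃ l ∈ c, ∃ t, l.atm = Atm.conc P t}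

/-- The number of atomic concepts occurring in a clause set. -/
noncomputable def numConcs (Ψ : Set Clause) : ℕ := Set.ncard {P | ∃ c ∈ Ψ, P ∈ clauseConcs c}

/-- The number of occurrences of existential role restrictions in a TBox. -/
def exOccs (T : TBox) : ℕ := T.sum (fun ci => ci.1.exCount + ci.2.exCount)

/-- The number of Skolem functions occurring in `Ψ` introduced for the original copy. -/
noncomputable def numOrigSk (Ψ : Set Clause) : ℕ :=
  Set.ncard {f : SkFun | f.1 = false ∧ ∃ c ∈ Ψ, f ∈ clauseFuns c}

def unitC (P : Bool × ℕ) (t : GTerm) : Clause := {⟨true, .conc P t.toTerm⟩}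
def negUnitC (P : Bool × ℕ) (t : GTerm) : Clause := {⟨false, .conc P t.toTerm⟩}

/-! ### Skolem trees and solution trees -/

structure SkolemTree where
  V : Finset ℕ
  root : ℕ
  E : Finset (ℕ × ℕ)
  s : ℕ → GTerm
  dep : ℕ → ℕ
  root_mem : root ∈ V
  s_root : s root = .sk0
  edge_mem : ∀ e ∈ E, e.1 ∈ V ∧ e.2 ∈ V
  edge_term : ∀ e ∈ E, s e.2 = s e.1 ∨ ∃ f, s e.2 = GTerm.app f (s e.1)
  parent_unique : ∀ e ∈ E, ∀ e' ∈ E, e.2 = e'.2 → e = e'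
  parent_exists : ∀ v ∈ V, v ≠ root → ∃ e ∈ E, e.2 = v
  dep_root : dep root = 0
  dep_edge : ∀ e ∈ E, dep e.2 = dep e.1 + 1

/-- `v` is an ancestor of `w` (every node is an ancestor of itself). -/
def SkolemTree.Ancestor (F : SkolemTree) (v w : ℕ) : Prop :=
  Relation.ReflTransGen (fun a b => (a, b) ∈ F.E) v w

/-- The descendants of `v` (the nodes of the subtree under `v`). -/
def SkolemTree.Desc (F : SkolemTree) (v : ℕ) : Set ℕ := {w | F.Ancestor v w}

/-- The positive labeling `l⁺`. -/
def posLab (Ψ : Set Clause) (F : SkolemTree) (v : ℕ) : Set ℕ :=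
  {A | InPIpos Set.univ Ψ (GAtm.conc (false, A) (F.s v))}

def SkolemTree.children (F : SkolemTree) (v : ℕ) : Finset ℕ :=
  (F.E.filter (fun e => e.1 = v)).image Prod.snd

def SkolemTree.leaves (F : SkolemTree) : Finset ℕ :=
  F.V.filter (fun v => F.E.filter (fun e => e.1 = v) = ∅)

/-- The unit role facts `{r(t, sk(t)) ∈ PI^{g+}}`. -/
def roleFacts (Ψ : Set Clause) : Set Clause :=
  {c | (∃ (r : ℕ) (t : GTerm) (f : SkFun),
        c = ({⟨true, Atm.role r t.toTerm (GTerm.app f t).toTerm⟩} : Clause)) ∧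
       c ∈ PIpos Set.univ Ψ}

def nonGroundOf (Ψ : Set Clause) : Set Clause := {c | c ∈ Ψ ∧ ¬ ClauseGround c}

/-- Negative labeling `l⁻` for a Skolem tree (labels are duplicate concept names,
recorded by their underlying name in `N_C`). -/
def IsNegLabeling (Ψ : Set Clause) (C2 : ℕ) (F : SkolemTree) (ln : ℕ → ℕ) : Prop :=
  ln F.root = C2 ∧
  ∀ v ∈ F.V, F.children v ≠ ∅ →
    Deriv ({negUnitC (true, ln v) (F.s v)} ∪ roleFacts Ψ ∪ nonGroundOf (presat Ψ))
      (fun _ => True)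
      ((F.children v).image
        (fun w => (⟨false, Atm.conc (true, ln w) (F.s w).toTerm⟩ : Lit)))

/-- The clause `φ_{F,l⁻}` determined by the leaves.  (Clauses are finite sets of
literals, so it is automatically considered up to repetition of literals.) -/
def leavesClause (F : SkolemTree) (ln : ℕ → ℕ) : Clause :=
  F.leaves.image (fun v => (⟨false, Atm.conc (true, ln v) (F.s v).toTerm⟩ : Lit))

def IsSolutionTree (Ψ : Set Clause) (C2 : ℕ) (F : SkolemTree) (ln : ℕ → ℕ) : Prop :=
  (∀ v ∈ F.V, (posLab Ψ F v).Nonempty) ∧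
  IsNegLabeling Ψ C2 F ln ∧
  leavesClause F ln ∈ PIneg Set.univ Ψ ∧
  ∃ (A B : Finset (ℕ × GTerm)) (H : TBox),
    ConstructibleVia Set.univ Ψ A B H ∧
    (↑B : Set (ℕ × GTerm)) = {p | ∃ v ∈ F.leaves, p = (ln v, F.s v)}

/-- The solution `{⊓l⁺(v) ⊑ l⁻(v) | v a leaf}` of a solution tree. -/
def treeSol (Ψ : Set Clause) (F : SkolemTree) (ln : ℕ → ℕ) : Set CI :=
  {ci | ∃ v ∈ F.leaves, ∃ s : Finset ℕ, (↑s : Set ℕ) = posLab Ψ F v ∧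
        ci = (conjOf s, ELConcept.atom (ln v))}

/-- Minimality: no solution tree with strictly fewer nodes has a solution
included in the solution of this one. -/
def MinimalSolutionTree (Ψ : Set Clause) (C2 : ℕ) (F : SkolemTree) (ln : ℕ → ℕ) : Prop :=
  IsSolutionTree Ψ C2 F ln ∧
  ∀ (F' : SkolemTree) (ln' : ℕ → ℕ),
    IsSolutionTree Ψ C2 F' ln' →
    treeSol Ψ F' ln' ⊆ treeSol Ψ F ln →
    F.V.card ≤ F'.V.card

/-- Replace the (unique) occurrence of `old` as a suffix of a ground term by `new`. -/
def GTerm.replaceSuffix (old new : GTerm) : GTerm → GTerm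
  | .sk0 => if GTerm.sk0 = old then new else .sk0
  | .app f u => if GTerm.app f u = old then new else .app f (GTerm.replaceSuffix old new u)

/-!
Every ground atom in a positive unit implicate of `Φ` holds in the least Herbrand model of `Φ`,
which is the Skolem chase of `C₁(sk₀)` under `T`: the barred copy of `T` and the clause
`¬C̄₂(sk₀)` are satisfied by leaving every barred atom false. Interpreting each Skolem term by
chosen witnesses of the existential restrictions maps the chase into any model of `T` at an
instance of `C₁`. Take the tree whose nodes are the subterms of the terms in `A`, with an edge
from `t` to `f(t)` labelled by the role of the CI `A ⊑ ∃r.B` that introduced `f`, and node `t`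
labelled by `{B | B(t) ∈ A}`. Its canonical model lies inside the chase, because a Skolem term
`f(t)` only enters the chase together with the edge `r(t, f(t))`; hence in every model of `T`
each instance of `C₁` is an instance of `C_𝔗`.
-/

section HerbrandModel

variable {S : Set GAtm} {ρ : ℕ → GTerm}

@[simp]
lemma herb_c0 : (herb S).c0 = .sk0 := rfl

@[simp]
lemma herb_app : (herb S).app = .app := rfl

@[simp]
lemma Term.eval_herb_toTerm (t : GTerm) : Term.eval (herb S) ρ t.toTerm = t := by
  induction t with
  | sk0 => rfl
  | app f s ih => simp only [GTerm.toTerm, Term.eval, ih]; rfl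

@[simp]
lemma Lit.sat_herb_conc (b : Bool) (P : Bool × ℕ) (t : Term) :
    Lit.sat (herb S) ρ ⟨b, .conc P t⟩ ↔ (GAtm.conc P (t.eval (herb S) ρ) ∈ S ↔ b) := by
  cases b <;> simp [Lit.sat, Atm.sat, herb]

@[simp]
lemma Lit.sat_herb_role (b : Bool) (r : ℕ) (t u : Term) :
    Lit.sat (herb S) ρ ⟨b, .role r t u⟩ ↔
      (GAtm.role r (t.eval (herb S) ρ) (u.eval (herb S) ρ) ∈ S ↔ b) := by
  cases b <;> simp [Lit.sat, Atm.sat, herb]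

end HerbrandModel

/-- The least Herbrand model of the original copy of `Φ`: the Skolem chase of `C₁(sk₀)`
under the normal-form CIs of `T`. -/
inductive Chase (T : TBox) (C1 : ℕ) : GAtm → Prop
  | base : Chase T C1 (.conc (false, C1) .sk0)
  | atom {A B : ℕ} {t : GTerm} :
      (.atom A, .atom B) ∈ T → Chase T C1 (.conc (false, A) t) →
      Chase T C1 (.conc (false, B) t)
  | conj {A₁ A₂ B : ℕ} {t : GTerm} :
      (.conj (.atom A₁) (.atom A₂), .atom B) ∈ T →
      Chase T C1 (.conc (false, A₁) t) → Chase T C1 (.conc (false, A₂) t) →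
      Chase T C1 (.conc (false, B) t)
  | exLeft {r A B : ℕ} {t u : GTerm} :
      (.ex r (.atom A), .atom B) ∈ T →
      Chase T C1 (.role r t u) → Chase T C1 (.conc (false, A) u) →
      Chase T C1 (.conc (false, B) t)
  | exRole {A r B : ℕ} {t : GTerm} :
      (.atom A, .ex r (.atom B)) ∈ T → Chase T C1 (.conc (false, A) t) →
      Chase T C1 (.role r t (.app (false, (.atom A, .ex r (.atom B))) t))
  | exConc {A r B : ℕ} {t : GTerm} :
      (.atom A, .ex r (.atom B)) ∈ T → Chase T C1 (.conc (false, A) t) →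
      Chase T C1 (.conc (false, B) (.app (false, (.atom A, .ex r (.atom B))) t))

def GTerm.subterms : GTerm → Finset GTerm
  | .sk0 => {.sk0}
  | .app f s => insert (.app f s) s.subterms

def GTerm.parent : GTerm → GTerm
  | .sk0 => .sk0
  | .app _ s => s

def GTerm.lastRole : GTerm → ℕ
  | .app (_, (_, .ex r _)) _ => r
  | _ => 0

lemma GTerm.mem_subterms_self (t : GTerm) : t ∈ t.subterms := by
  cases t <;> simp [subterms]

lemma GTerm.parent_mem_subterms {t u : GTerm} (hu : u ∈ t.subterms) :
    u.parent ∈ t.subterms := by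
  induction t with
  | sk0 => obtain rfl := Finset.mem_singleton.1 hu; exact hu
  | app f s ih =>
    rcases Finset.mem_insert.1 hu with rfl | hu
    · exact Finset.mem_insert_of_mem s.mem_subterms_self
    · exact Finset.mem_insert_of_mem (ih hu)

def GAtm.subject : GAtm → GTerm
  | .conc _ t => t
  | .role _ t _ => t

section Chase

variable {T : TBox} {C1 : ℕ}

lemma Chase.ne_conc_dup {a : GAtm} (h : Chase T C1 a) (A : ℕ) (t : GTerm) :
    a ≠ .conc (true, A) t := by
  cases h <;> simp

lemma clauseSat_chase_of_mem_clausesOf_false {ci : CI} (hci : ci ∈ T) {c : Clause}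
    (hc : c ∈ clausesOf false ci) : ClauseSat (herb {a | Chase T C1 a}) c := by
  unfold clausesOf at hc
  split at hc
  · obtain rfl := hc
    intro ρ
    simpa [ncl, pcl, vx, Term.eval, ← imp_iff_not_or] using fun h => Chase.atom hci h
  · obtain rfl := hc
    intro ρ
    simpa [ncl, pcl, vx, Term.eval, ← imp_iff_not_or] using
      fun h₁ h₂ => Chase.conj hci h₁ h₂
  · obtain rfl := hc
    intro ρ
    simpa [nrl, ncl, pcl, vx, vy, Term.eval, ← imp_iff_not_or] using
      fun hr hA => Chase.exLeft hci hr hA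
  · obtain rfl | rfl := hc <;> intro ρ
    · simpa [ncl, prl, vx, Term.eval, ← imp_iff_not_or] using fun h => Chase.exRole hci h
    · simpa [ncl, pcl, vx, Term.eval, ← imp_iff_not_or] using fun h => Chase.exConc hci h
  · exact absurd hc (Set.notMem_empty c)

lemma exists_ncl_dup_mem_of_mem_clausesOf_true {ci : CI} {c : Clause}
    (hc : c ∈ clausesOf true ci) : ∃ A t, ncl true A t ∈ c := by
  unfold clausesOf at hc
  split at hc
  next A _ => obtain rfl := hc; exact ⟨A, vx, by simp⟩
  next A _ _ => obtain rfl := hc; exact ⟨A, vx, by simp⟩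
  next A _ => obtain rfl := hc; exact ⟨A, vy, by simp⟩
  next A _ _ => obtain rfl | rfl := hc <;> exact ⟨A, vx, by simp⟩
  · exact absurd hc (Set.notMem_empty c)

lemma clauseSat_chase_of_ncl_dup_mem {c : Clause} {A : ℕ} {t : Term} (h : ncl true A t ∈ c) :
    ClauseSat (herb {a | Chase T C1 a}) c :=
  fun ρ => ⟨_, h, by simpa [ncl] using fun hA => hA.ne_conc_dup A _ rfl⟩

theorem chase_models_translation (C2 : ℕ) :
    CModels (herb {a | Chase T C1 a}) (Translation T C1 C2) := by
  rintro c (hc | rfl | rfl)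
  · obtain ⟨ci, hci, hc | hc⟩ := Set.mem_iUnion₂.1 hc
    · exact clauseSat_chase_of_mem_clausesOf_false hci hc
    · obtain ⟨A, t, h⟩ := exists_ncl_dup_mem_of_mem_clausesOf_true hc
      exact clauseSat_chase_of_ncl_dup_mem h
  · exact fun _ => ⟨_, Finset.mem_singleton_self _, by simpa [pcl, Term.eval] using Chase.base⟩
  · exact clauseSat_chase_of_ncl_dup_mem (Finset.mem_singleton_self _)

theorem chase_of_entails_unit {C2 : ℕ} {a : GAtm}
    (h : CEntails (Translation T C1 C2) {⟨true, a.toAtm⟩}) : Chase T C1 a := by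
  obtain ⟨l, hl, hsat⟩ := h _ _ (chase_models_translation C2) fun _ => .sk0
  obtain rfl := Finset.mem_singleton.1 hl
  cases a <;> simpa [GAtm.toAtm] using hsat

-- The fallback `s.interp I d` (no witness exists) is junk; it is never reached on chase terms.
open Classical in
noncomputable def GTerm.interp {α : Type} (I : Interp α) (d : α) : GTerm → α
  | .sk0 => d
  | .app (_, (_, .ex r D)) s =>
      if h : ∃ e, (s.interp I d, e) ∈ I.role r ∧ e ∈ D.sem I then h.choose else s.interp I d
  | .app _ s => s.interp I d

lemma GTerm.interp_app_ex {α : Type} {I : Interp α} {d : α} {b : Bool} {C D : ELConcept}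
    {r : ℕ} {t : GTerm} (h : ∃ e, (t.interp I d, e) ∈ I.role r ∧ e ∈ D.sem I) :
    (t.interp I d, (GTerm.app (b, (C, .ex r D)) t).interp I d) ∈ I.role r ∧
      (GTerm.app (b, (C, .ex r D)) t).interp I d ∈ D.sem I := by
  rw [GTerm.interp, dif_pos h]
  exact h.choose_spec

def GAtm.HoldsIn {α : Type} (I : Interp α) (val : GTerm → α) : GAtm → Prop
  | .conc P t => val t ∈ I.conc P.2
  | .role r t u => (val t, val u) ∈ I.role r

theorem Chase.holdsIn {α : Type} {I : Interp α} (hI : Models I T) {d : α}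
    (hd : d ∈ I.conc C1) {a : GAtm} (h : Chase T C1 a) : a.HoldsIn I (GTerm.interp I d) := by
  induction h with
  | base => exact hd
  | atom hci _ ih => exact hI _ hci ih
  | conj hci _ _ ih₁ ih₂ => exact hI _ hci ⟨ih₁, ih₂⟩
  | exLeft hci _ _ ihr ihA => exact hI _ hci ⟨_, ihr, ihA⟩
  | exRole hci _ ih => exact (GTerm.interp_app_ex (hI _ hci ih)).1
  | exConc hci _ ih => exact (GTerm.interp_app_ex (hI _ hci ih)).2

theorem Chase.role_of_mem_subterms {a : GAtm} (h : Chase T C1 a) :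
    ∀ u ∈ a.subject.subterms, u ≠ .sk0 → Chase T C1 (.role u.lastRole u.parent u) := by
  induction h with
  | base => exact fun u hu hne => absurd (Finset.mem_singleton.1 hu) hne
  | atom _ _ ih => exact ih
  | conj _ _ _ ih _ => exact ih
  | exLeft _ _ _ ih _ => exact ih
  | exRole _ _ ih => exact ih
  | exConc hci hA ih =>
    intro u hu hne
    rcases Finset.mem_insert.1 hu with rfl | hu
    · exact .exRole hci hA
    · exact ih u hu hne

end Chase

lemma ELConcept.mem_sem_foldr_conj {α : Type} (I : Interp α) (L : List ELConcept) (x : α) :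
    x ∈ (L.foldr ELConcept.conj ELConcept.top).sem I ↔ ∀ C ∈ L, x ∈ C.sem I := by
  induction L with
  | nil => simp [ELConcept.sem]
  | cons C L ih => simp [ELConcept.sem, ih]

lemma mem_sem_conjOf {α : Type} (I : Interp α) (s : Finset ℕ) (x : α) :
    x ∈ (conjOf s).sem I ↔ ∀ A ∈ s, x ∈ I.conc A := by
  simp [conjOf, ELConcept.mem_sem_foldr_conj, ELConcept.sem]

theorem DescTree.mem_sem_conceptAt (t : DescTree) {α : Type} (I : Interp α) (val : ℕ → α)
    (hlab : ∀ v ∈ t.V, ∀ A ∈ t.label v, val v ∈ I.conc A)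
    (hedge : ∀ e ∈ t.E, (val e.1, val e.2.2) ∈ I.role e.2.1) :
    ∀ n, ∀ v ∈ t.V, val v ∈ (t.conceptAt n v).sem I := by
  intro n
  induction n with
  | zero => exact fun v hv => (mem_sem_conjOf I _ _).2 (hlab v hv)
  | succ n ih =>
    intro v hv
    rw [DescTree.conceptAt, ELConcept.mem_sem_foldr_conj]
    intro C hC
    rcases List.mem_append.1 hC with hC | hC
    · obtain ⟨A, hA, rfl⟩ := List.mem_map.1 hC
      exact hlab v hv A (Finset.mem_toList.1 hA)
    · obtain ⟨e, he, rfl⟩ := List.mem_map.1 hC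
      obtain ⟨heE, rfl⟩ := Finset.mem_filter.1 (Finset.mem_toList.1 he)
      exact ⟨val e.2.2, hedge e heE, ih _ (t.edge_mem e heE).2⟩

theorem entails_concept_of_canonModel_subset_chase {T : TBox} {C1 : ℕ} {t : DescTree}
    {sl : ℕ → GTerm} (hroot : sl t.root = .sk0)
    (hsub : canonModel t sl ⊆ {a | Chase T C1 a}) :
    Entails T (.atom C1) t.concept := by
  intro α I hI d hd
  have hval := t.mem_sem_conceptAt I (fun v => (sl v).interp I d)
    (fun v hv A hA => (hsub (Or.inr ⟨v, hv, A, hA, rfl⟩)).holdsIn hI hd)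
    (fun e he => (hsub (Or.inl ⟨e, he, rfl⟩)).holdsIn hI hd) t.V.card t.root t.root_mem
  rwa [hroot] at hval

section TermTree

variable (S : Finset GTerm)

noncomputable def termAt (v : ℕ) : GTerm := S.toList.getD v .sk0

noncomputable def termIdx (t : GTerm) : ℕ := S.toList.idxOf t

variable {S}

lemma termIdx_lt {t : GTerm} (ht : t ∈ S) : termIdx S t < S.card := by
  rw [← Finset.length_toList]
  exact List.idxOf_lt_length_iff.2 (Finset.mem_toList.2 ht)

lemma termAt_termIdx {t : GTerm} (ht : t ∈ S) : termAt S (termIdx S t) = t := by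
  have h := termIdx_lt ht
  rw [← Finset.length_toList] at h
  rw [termAt, List.getD_eq_getElem _ _ h]
  exact List.getElem_idxOf h

lemma termAt_mem {v : ℕ} (hv : v < S.card) : termAt S v ∈ S := by
  rw [← Finset.length_toList] at hv
  rw [termAt, List.getD_eq_getElem _ _ hv]
  exact Finset.mem_toList.1 (List.getElem_mem hv)

lemma termIdx_termAt {v : ℕ} (hv : v < S.card) : termIdx S (termAt S v) = v := by
  rw [← Finset.length_toList] at hv
  rw [termAt, List.getD_eq_getElem _ _ hv]
  exact (Finset.nodup_toList S).idxOf_getElem _ _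

-- Nodes are positions in `S.toList`; `termAt S` is the Skolem labelling.
variable (S) in
noncomputable def termTree (h0 : GTerm.sk0 ∈ S)
    (hpar : ∀ t ∈ S, t.parent ∈ S) (lab : GTerm → Finset ℕ) : DescTree where
  V := Finset.range S.card
  root := termIdx S .sk0
  E := (S.erase .sk0).image fun t => (termIdx S t.parent, t.lastRole, termIdx S t)
  label v := lab (termAt S v)
  dep v := (termAt S v).depth
  root_mem := Finset.mem_range.2 (termIdx_lt h0)
  edge_mem := by
    simp only [Finset.mem_image, Finset.mem_erase, Finset.mem_range]
    rintro _ ⟨t, ⟨-, ht⟩, rfl⟩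
    exact ⟨termIdx_lt (hpar t ht), termIdx_lt ht⟩
  parent_unique := by
    simp only [Finset.mem_image, Finset.mem_erase]
    rintro _ ⟨t, ⟨-, ht⟩, rfl⟩ _ ⟨u, ⟨-, hu⟩, rfl⟩ h
    obtain rfl : t = u := by
      rw [← termAt_termIdx ht, ← termAt_termIdx hu]
      exact congrArg (termAt S) h
    rfl
  parent_exists := by
    intro v hv hroot
    have hv := Finset.mem_range.1 hv
    refine ⟨_, Finset.mem_image.2
      ⟨termAt S v, Finset.mem_erase.2 ⟨?_, termAt_mem hv⟩, rfl⟩, termIdx_termAt hv⟩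
    intro h
    exact hroot (by rw [← h, termIdx_termAt hv])
  dep_root := by simp only [termAt_termIdx h0, GTerm.depth]
  dep_edge := by
    simp only [Finset.mem_image, Finset.mem_erase]
    rintro _ ⟨t, ⟨ht0, ht⟩, rfl⟩
    cases t with
    | sk0 => exact absurd rfl ht0
    | app f s =>
      have hs : s ∈ S := hpar _ ht
      simp only [termAt_termIdx ht, termAt_termIdx hs, GTerm.parent, GTerm.depth]

variable {h0 : GTerm.sk0 ∈ S} {hpar : ∀ t ∈ S, t.parent ∈ S} {lab : GTerm → Finset ℕ}

lemma termAt_termTree_root : termAt S (termTree S h0 hpar lab).root = .sk0 :=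
  termAt_termIdx h0

lemma canonA_termTree :
    canonA (termTree S h0 hpar lab) (termAt S) = {p | p.2 ∈ S ∧ p.1 ∈ lab p.2} := by
  ext ⟨A, t⟩
  constructor
  · rintro ⟨v, hv, hA, rfl⟩
    exact ⟨termAt_mem (Finset.mem_range.1 hv), hA⟩
  · rintro ⟨ht, hA⟩
    exact ⟨termIdx S t, Finset.mem_range.2 (termIdx_lt ht),
      by simpa [termTree, termAt_termIdx ht], (termAt_termIdx ht).symm⟩

lemma canonModel_termTree_subset {P : Set GAtm}
    (hrole : ∀ t ∈ S, t ≠ .sk0 → .role t.lastRole t.parent t ∈ P)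
    (hconc : ∀ t ∈ S, ∀ A ∈ lab t, .conc (false, A) t ∈ P) :
    canonModel (termTree S h0 hpar lab) (termAt S) ⊆ P := by
  rintro _ (⟨e, he, rfl⟩ | ⟨v, hv, A, hA, rfl⟩)
  · obtain ⟨t, ht, rfl⟩ := Finset.mem_image.1 he
    obtain ⟨ht0, ht⟩ := Finset.mem_erase.1 ht
    simpa [termAt_termIdx ht, termAt_termIdx (hpar t ht)] using hrole t ht ht0
  · exact hconc _ (termAt_mem (Finset.mem_range.1 hv)) A hA

end TermTree

theorem subsumer_construction_from_pipos_general
    (T : TBox) (C1 C2 : ℕ)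
    (A : Finset (ℕ × GTerm))
    (hmem : ∀ p ∈ A,
      InPIpos Set.univ (Translation T C1 C2) (GAtm.conc (false, p.1) p.2)) :
    ∃ (t : DescTree) (sl : ℕ → GTerm),
      (↑A : Set (ℕ × GTerm)) = canonA t sl ∧ Entails T (.atom C1) t.concept := by
  have hchase : ∀ p ∈ A, Chase T C1 (.conc (false, p.1) p.2) :=
    fun p hp => chase_of_entails_unit (hmem p hp).1.1
  set S := insert GTerm.sk0 (A.biUnion fun p => p.2.subterms)
  have hpar : ∀ t ∈ S, t.parent ∈ S := by
    simp only [S, Finset.mem_insert, Finset.mem_biUnion]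
    rintro t (rfl | ⟨p, hp, ht⟩)
    · exact Or.inl rfl
    · exact Or.inr ⟨p, hp, GTerm.parent_mem_subterms ht⟩
  let lab (t : GTerm) : Finset ℕ := (A.filter (·.2 = t)).image Prod.fst
  have hlab (p : ℕ × GTerm) : p.1 ∈ lab p.2 ↔ p ∈ A := by simp [lab]
  refine ⟨termTree S (Finset.mem_insert_self _ _) hpar lab, termAt S, ?_,
    entails_concept_of_canonModel_subset_chase termAt_termTree_root
      (canonModel_termTree_subset ?_ ?_)⟩
  · ext p
    rw [canonA_termTree, Set.mem_ofPred_eq, hlab, Finset.mem_coe]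
    exact ⟨fun hp => ⟨Finset.mem_insert_of_mem
      (Finset.mem_biUnion.2 ⟨p, hp, p.2.mem_subterms_self⟩), hp⟩, And.right⟩
  · intro t ht hne
    obtain ⟨p, hp, ht⟩ := Finset.mem_biUnion.1 ((Finset.mem_insert.1 ht).resolve_left hne)
    exact (hchase p hp).role_of_mem_subterms t ht hne
  · exact fun t _ B hB => hchase (B, t) ((hlab (B, t)).1 hB)

/-- construction of subsumers of `C₁` from positive prime implicates. -/
theorem subsumer_construction_from_pipos
    (T : TBox) (C1 C2 : ℕ) (hNF : NormalForm T)
    (hno : ¬ Entails T (.atom C1) (.atom C2))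
    (A : Finset (ℕ × GTerm)) (hA : A.Nonempty)
    (hmem : ∀ p ∈ A,
      InPIpos Set.univ (Translation T C1 C2) (GAtm.conc (false, p.1) p.2)) :
    ∃ (t : DescTree) (sl : ℕ → GTerm),
      (↑A : Set (ℕ × GTerm)) = canonA t sl ∧ Entails T (.atom C1) t.concept :=
  subsumer_construction_from_pipos_general T C1 C2 A hmem

end ELAbd
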